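/- arXiv:2302.09047 — 2 statements merged into one kernel-verified Lean document; each statement's English description precedes it below -/
import Mathlib

section
/- For a uniformly random subset S of {0,1}^n, the variance of the number X_r of r-dimensional subcubes contained in S equals Σ_{i=0}^{r} [n! · 2^{n-i} / (i! · (r-i)!² · (n-2r+i)! · 2^{2^{r+1}})] · (2^{2^i} − 1), for n ≥ 2r. -/
open Finset

def cube {n : ℕ} (w : Fin n → Option Bool) : Finset (Fin n → Bool) :=
  Finset.univ.filter fun x => ∀ i, ∀ b, w i = some b → x i = b

def Word (n r : ℕ) : Finset (Fin n → Option Bool) :=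
  Finset.univ.filter fun w => (Finset.univ.filter fun i => w i = none).card = r

/-- Expectation with respect to a uniformly random subset `S ⊆ {0,1}^n`. -/
noncomputable def Ex (n : ℕ) (f : Finset (Fin n → Bool) → ℝ) : ℝ :=
  (∑ S : Finset (Fin n → Bool), f S) / (Fintype.card (Finset (Fin n → Bool)))

/-- The number of `r`-dimensional subcubes contained in `S`. -/
def Xr (n r : ℕ) (S : Finset (Fin n → Bool)) : ℕ :=
  ((Word n r).filter fun w => cube w ⊆ S).card

/-!
Write `Xr n r S` as the sum, over the words `w` of `r`-dimensional subcubes, of the indicators of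
`cube w ⊆ S`. A fixed set `T` lies in `S` with probability `2^(-#T)`, so two such indicators have
covariance `(2^#(C ∩ C') - 1) / 2^(2^(r+1))`, which vanishes for disjoint cubes. Two subcubes meet
iff their words agree wherever both are fixed, and then `C ∩ C'` is the subcube of the word
`meet w w'`, of some dimension `i ≤ r`. The ordered pairs meeting in a given `i`-dimensional
subcube `M` arise from `M` by freeing two disjoint `(r - i)`-sets of its `n - i` fixed coordinates,
which gives `(n-i).choose (r-i) * (n-r).choose (r-i)` pairs, and there are `n.choose i * 2^(n-i)`
such `M`.
-/

lemma half_pow_card_union_sub {α : Type*} [DecidableEq α] (T U : Finset α) :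
    (1 / 2 : ℝ) ^ #(T ∪ U) - (1 / 2) ^ #T * (1 / 2) ^ #U = (2 ^ #(T ∩ U) - 1) / 2 ^ (#T + #U) := by
  have h : (2 : ℝ) ^ #(T ∪ U) * 2 ^ #(T ∩ U) = 2 ^ #T * 2 ^ #U := by
    rw [← pow_add, ← pow_add, card_union_add_card_inter]
  simp only [one_div_pow, pow_add]
  field_simp
  linear_combination -h

section Expectation

variable {n : ℕ}

lemma Ex_sum {ι : Type*} (s : Finset ι) (f : ι → Finset (Fin n → Bool) → ℝ) :
    Ex n (fun S => ∑ a ∈ s, f a S) = ∑ a ∈ s, Ex n (f a) := by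
  simp only [Ex, ← sum_div]
  rw [sum_comm]

lemma Ex_sub_sq (f : Finset (Fin n → Bool) → ℝ) :
    Ex n (fun S => (f S - Ex n f) ^ 2) = Ex n (fun S => f S ^ 2) - Ex n f ^ 2 := by
  have hN : (Fintype.card (Finset (Fin n → Bool)) : ℝ) ≠ 0 := by positivity
  simp only [Ex, sub_sq, sum_add_distrib, sum_sub_distrib, ← sum_mul, ← mul_sum, sum_const,
    card_univ, nsmul_eq_mul]
  field_simp
  ring

lemma Ex_indicator (T : Finset (Fin n → Bool)) :
    Ex n (fun S => if T ⊆ S then 1 else 0) = (1 / 2) ^ #T := by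
  have hsupersets : ({S | T ⊆ S} : Finset (Finset (Fin n → Bool))) = Icc T univ := by
    ext S
    simp [subset_univ]
  have hT : #T ≤ 2 ^ n := by simpa using T.card_le_univ
  rw [Ex, sum_boole, hsupersets, card_Icc_finset (subset_univ T), Fintype.card_finset]
  simp only [card_univ, Fintype.card_pi, Fintype.card_bool, prod_const, Fintype.card_fin]
  rw [div_eq_iff (by positivity), one_div_pow, one_div, eq_inv_mul_iff_mul_eq₀ (by positivity)]
  push_cast
  rw [← pow_add, Nat.add_sub_cancel' hT]

lemma Ex_variance_card_filter_subset {ι : Type*} (s : Finset ι) (T : ι → Finset (Fin n → Bool)) :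
    Ex n (fun S => ((#{a ∈ s | T a ⊆ S} : ℝ) - Ex n (fun S' => (#{a ∈ s | T a ⊆ S'} : ℝ))) ^ 2)
      = ∑ p ∈ s ×ˢ s, (2 ^ #(T p.1 ∩ T p.2) - 1) / 2 ^ (#(T p.1) + #(T p.2)) := by
  have hcount (S : Finset (Fin n → Bool)) :
      (#{a ∈ s | T a ⊆ S} : ℝ) = ∑ a ∈ s, if T a ⊆ S then 1 else 0 := by
    rw [sum_boole]
  have hsq (S : Finset (Fin n → Bool)) : (#{a ∈ s | T a ⊆ S} : ℝ) ^ 2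
      = ∑ p ∈ s ×ˢ s, if T p.1 ∪ T p.2 ⊆ S then 1 else 0 := by
    simp only [hcount, sq, sum_mul_sum, ← sum_product', ite_zero_mul_ite_zero, union_subset_iff,
      mul_one]
  rw [Ex_sub_sq]
  simp only [hsq]
  simp only [hcount, Ex_sum, Ex_indicator]
  rw [sq, sum_mul_sum, ← sum_product', ← sum_sub_distrib]
  simp only [half_pow_card_union_sub]

end Expectation

namespace Subcube

variable {n : ℕ}

def free (w : Fin n → Option Bool) : Finset (Fin n) := {i | w i = none}

lemma mem_free {w : Fin n → Option Bool} {i : Fin n} : i ∈ free w ↔ w i = none := by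
  simp [free]

lemma mem_Word {w : Fin n → Option Bool} {r : ℕ} : w ∈ Word n r ↔ #(free w) = r := by
  simp [Word, free]

def values : Option Bool → Finset Bool := fun o => o.elim univ singleton

lemma cube_eq_piFinset (w : Fin n → Option Bool) :
    cube w = Fintype.piFinset fun i => values (w i) := by
  ext x
  simp only [cube, mem_filter, mem_univ, true_and, Fintype.mem_piFinset]
  refine forall_congr' fun i => ?_
  cases w i <;> simp [values]

lemma card_cube (w : Fin n → Option Bool) : #(cube w) = 2 ^ #(free w) := by
  have hvalues (o : Option Bool) : #(values o) = if o = none then 2 else 1 := by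
    cases o <;> simp [values]
  simp only [cube_eq_piFinset, Fintype.card_piFinset, hvalues, prod_ite, prod_const, one_pow,
    mul_one, free]

def Compatible (w w' : Fin n → Option Bool) : Prop :=
  ∀ i, ∀ b ∈ w i, ∀ b' ∈ w' i, b = b'

instance : DecidableRel (Compatible (n := n)) := fun w w' => by
  unfold Compatible; infer_instance

def meet (w w' : Fin n → Option Bool) : Fin n → Option Bool := fun i => (w i).or (w' i)

lemma cube_inter_cube {w w' : Fin n → Option Bool} (h : Compatible w w') :
    cube w ∩ cube w' = cube (meet w w') := by
  have hvalues : ∀ o o' : Option Bool, (∀ b ∈ o, ∀ b' ∈ o', b = b') →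
      values o ∩ values o' = values (o.or o') := by decide
  simp only [cube_eq_piFinset, ← Fintype.piFinset_inter, meet, hvalues _ _ (h _)]

lemma disjoint_cube {w w' : Fin n → Option Bool} (h : ¬ Compatible w w') :
    Disjoint (cube w) (cube w') := by
  simp only [Compatible, not_forall] at h
  obtain ⟨i, b, hb, b', hb', hne⟩ := h
  refine disjoint_left.2 fun x hx hx' => hne ?_
  simp only [cube, mem_filter] at hx hx'
  rw [← hx.2 i b hb, ← hx'.2 i b' hb']

lemma free_meet (w w' : Fin n → Option Bool) : free (meet w w') = free w ∩ free w' := by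
  ext i
  simp [free, meet, Option.or_eq_none_iff]

lemma card_free_eq (A : Finset (Fin n)) :
    #{w : Fin n → Option Bool | free w = A} = 2 ^ (n - #A) := by
  have hpi : ({w | free w = A} : Finset (Fin n → Option Bool))
      = Fintype.piFinset fun j => if j ∈ A then {none} else univ.map .some := by
    ext w
    simp only [mem_filter, mem_univ, true_and, Fintype.mem_piFinset, Finset.ext_iff, mem_free]
    refine forall_congr' fun j => ?_
    by_cases hj : j ∈ A <;> cases w j <;> simp [hj]
  rw [hpi, Fintype.card_piFinset]
  simp only [apply_ite card, card_singleton, card_map, card_univ, Fintype.card_bool, prod_ite,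
    prod_const_one, one_mul, prod_const]
  simp [filter_not, card_univ_sdiff]

lemma card_Word (i : ℕ) : #(Word n i) = n.choose i * 2 ^ (n - i) := by
  have hmaps : ∀ w ∈ Word n i, free w ∈ powersetCard i univ := fun w hw => by
    simpa [mem_powersetCard] using mem_Word.1 hw
  rw [card_eq_sum_card_fiberwise hmaps]
  have hfiber : ∀ A ∈ powersetCard i univ, #{w ∈ Word n i | free w = A} = 2 ^ (n - i) := by
    intro A hA
    rw [mem_powersetCard] at hA
    rw [← hA.2, ← card_free_eq]
    congr 1
    ext w
    simp only [mem_filter, mem_Word, mem_univ, true_and]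
    exact ⟨And.right, fun h => ⟨h ▸ rfl, h⟩⟩
  rw [sum_congr rfl hfiber, sum_const, card_powersetCard, card_univ, Fintype.card_fin, smul_eq_mul]

def release (m : Fin n → Option Bool) (B : Finset (Fin n)) : Fin n → Option Bool :=
  fun i => if i ∈ B then none else m i

def Refines (m w : Fin n → Option Bool) : Prop :=
  ∀ i, ∀ b ∈ w i, m i = some b

lemma meet_refines_left (w w' : Fin n → Option Bool) : Refines (meet w w') w := by
  intro i b hb
  simp [meet, Option.mem_def.1 hb]

lemma meet_refines_right {w w' : Fin n → Option Bool} (h : Compatible w w') :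
    Refines (meet w w') w' := by
  intro i b' hb'
  cases hw : w i with
  | none => simp [meet, hw, Option.mem_def.1 hb']
  | some b => simp [meet, hw, h i b hw b' hb']

lemma free_subset_free {m w : Fin n → Option Bool} (h : Refines m w) : free m ⊆ free w := by
  intro i hi
  rw [mem_free] at hi ⊢
  cases hw : w i with
  | none => rfl
  | some b => simpa [hi] using h i b hw

lemma release_free_sdiff {m w : Fin n → Option Bool} (h : Refines m w) :
    release m (free w \ free m) = w := by
  funext i
  cases hw : w i with
  | none => by_cases hm : m i = none <;> simp [release, mem_free, hw, hm]
  | some b => simp [release, mem_free, hw, h i b hw]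

lemma free_release (m : Fin n → Option Bool) (B : Finset (Fin n)) :
    free (release m B) = free m ∪ B := by
  ext i
  by_cases hi : i ∈ B <;> simp [release, mem_free, hi]

lemma compatible_release (m : Fin n → Option Bool) (B C : Finset (Fin n)) :
    Compatible (release m B) (release m C) := by
  intro i b hb b' hb'
  simp only [release, Option.mem_def] at hb hb'
  split_ifs at hb hb'
  exact Option.some_injective _ (hb.symm.trans hb')

lemma meet_release (m : Fin n → Option Bool) {B C : Finset (Fin n)} (h : Disjoint B C) :
    meet (release m B) (release m C) = m := by
  funext i
  by_cases hB : i ∈ B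
  · simp [meet, release, hB, disjoint_left.1 h hB]
  · cases hm : m i <;> simp [meet, release, hB, hm]

lemma release_mem_Word {m : Fin n → Option Bool} {B : Finset (Fin n)} {r : ℕ}
    (hB : Disjoint (free m) B) (hcard : #(free m) + #B = r) : release m B ∈ Word n r := by
  rw [mem_Word, free_release, card_union_of_disjoint hB, hcard]

lemma card_sigma_powersetCard_sdiff {α : Type*} [DecidableEq α] (F : Finset α) (a b : ℕ) :
    #((F.powersetCard a).sigma fun B => (F \ B).powersetCard b)
      = (#F).choose a * (#F - a).choose b := by
  have hfiber : ∀ B ∈ F.powersetCard a, #((F \ B).powersetCard b) = (#F - a).choose b := by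
    intro B hB
    rw [mem_powersetCard] at hB
    rw [card_powersetCard, card_sdiff_of_subset hB.1, hB.2]
  rw [card_sigma, sum_congr rfl hfiber, sum_const, card_powersetCard, smul_eq_mul]

lemma card_pairs_with_meet_eq_card_sigma {m : Fin n → Option Bool} {r : ℕ} (hr : #(free m) ≤ r) :
    #{p ∈ Word n r ×ˢ Word n r | Compatible p.1 p.2 ∧ meet p.1 p.2 = m}
      = #(((free m)ᶜ.powersetCard (r - #(free m))).sigma
          fun B => ((free m)ᶜ \ B).powersetCard (r - #(free m))) := by
  refine card_nbij' (fun p => ⟨free p.1 \ free m, free p.2 \ free m⟩)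
    (fun q => (release m q.1, release m q.2)) ?_ ?_ ?_ ?_
  · rintro ⟨w, w'⟩ hp
    simp only [mem_coe, mem_filter, mem_product, mem_Word] at hp
    obtain ⟨⟨hw, hw'⟩, hcomp, rfl⟩ := hp
    simp only [mem_coe, mem_sigma, mem_powersetCard]
    refine ⟨⟨subset_compl_iff_disjoint_right.2 sdiff_disjoint, ?_⟩, ?_, ?_⟩
    · rw [card_sdiff_of_subset (free_subset_free (meet_refines_left w w')), hw]
    · intro j hj
      simp only [free_meet, mem_sdiff, mem_inter, mem_compl] at hj ⊢
      tauto
    · rw [card_sdiff_of_subset (free_subset_free (meet_refines_right hcomp)), hw']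
  · rintro ⟨B, C⟩ hq
    simp only [mem_coe, mem_sigma, mem_powersetCard] at hq
    obtain ⟨⟨hB, hBcard⟩, hC, hCcard⟩ := hq
    simp only [mem_coe, mem_filter, mem_product]
    refine ⟨⟨release_mem_Word (subset_compl_iff_disjoint_left.1 hB) (by omega),
      release_mem_Word (subset_compl_iff_disjoint_left.1 (hC.trans sdiff_subset)) (by omega)⟩,
      compatible_release m B C, meet_release m (disjoint_of_subset_right hC disjoint_sdiff)⟩
  · rintro ⟨w, w'⟩ hp
    simp only [mem_coe, mem_filter] at hp
    obtain ⟨-, hcomp, rfl⟩ := hp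
    simp only [release_free_sdiff (meet_refines_left w w'),
      release_free_sdiff (meet_refines_right hcomp)]
  · rintro ⟨B, C⟩ hq
    simp only [mem_coe, mem_sigma, mem_powersetCard] at hq
    obtain ⟨⟨hB, -⟩, hC, -⟩ := hq
    simp only [free_release, union_sdiff_cancel_left (subset_compl_iff_disjoint_left.1 hB),
      union_sdiff_cancel_left (subset_compl_iff_disjoint_left.1 (hC.trans sdiff_subset))]

lemma card_pairs_with_meet_eq {m : Fin n → Option Bool} {i r : ℕ} (hm : #(free m) = i)
    (hi : i ≤ r) :
    #{p ∈ Word n r ×ˢ Word n r | Compatible p.1 p.2 ∧ meet p.1 p.2 = m}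
      = (n - i).choose (r - i) * (n - r).choose (r - i) := by
  rw [card_pairs_with_meet_eq_card_sigma (hm ▸ hi), card_sigma_powersetCard_sdiff, card_compl,
    Fintype.card_fin, hm, show n - i - (r - i) = n - r by omega]

lemma card_pairs_with_meet_card_free_eq {i r : ℕ} (hi : i ≤ r) :
    #{p ∈ Word n r ×ˢ Word n r | Compatible p.1 p.2 ∧ #(free (meet p.1 p.2)) = i}
      = n.choose i * ((n - i).choose (r - i) * (n - r).choose (r - i)) * 2 ^ (n - i) := by
  have hmaps : ∀ p ∈ {p ∈ Word n r ×ˢ Word n r |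
      Compatible p.1 p.2 ∧ #(free (meet p.1 p.2)) = i}, meet p.1 p.2 ∈ Word n i :=
    fun p hp => mem_Word.2 (mem_filter.1 hp).2.2
  have hfiber : ∀ m ∈ Word n i, #{p ∈ {p ∈ Word n r ×ˢ Word n r |
      Compatible p.1 p.2 ∧ #(free (meet p.1 p.2)) = i} | meet p.1 p.2 = m}
        = (n - i).choose (r - i) * (n - r).choose (r - i) := by
    intro m hm
    rw [filter_filter, ← card_pairs_with_meet_eq (mem_Word.1 hm) hi]
    congr 1
    refine filter_congr fun p _ => ?_
    constructor
    · exact fun h => ⟨h.1.1, h.2⟩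
    · rintro ⟨hcomp, rfl⟩
      exact ⟨⟨hcomp, mem_Word.1 hm⟩, rfl⟩
  rw [card_eq_sum_card_fiberwise hmaps, sum_congr rfl hfiber, sum_const, card_Word, smul_eq_mul,
    mul_right_comm]

lemma sum_pairs_card_inter_cube {r : ℕ} {M : Type*} [AddCommMonoid M] (f : ℕ → M) (hf : f 0 = 0) :
    ∑ p ∈ Word n r ×ˢ Word n r, f #(cube p.1 ∩ cube p.2)
      = ∑ i ∈ range (r + 1),
          #{p ∈ Word n r ×ˢ Word n r | Compatible p.1 p.2 ∧ #(free (meet p.1 p.2)) = i}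
            • f (2 ^ i) := by
  have hterm : ∀ p ∈ Word n r ×ˢ Word n r, f #(cube p.1 ∩ cube p.2)
      = if Compatible p.1 p.2 then f (2 ^ #(free (meet p.1 p.2))) else 0 := by
    intro p _
    split_ifs with hcomp
    · rw [cube_inter_cube hcomp, card_cube]
    · rw [disjoint_iff_inter_eq_empty.1 (disjoint_cube hcomp), card_empty, hf]
  have hmaps : ∀ p ∈ {p ∈ Word n r ×ˢ Word n r | Compatible p.1 p.2},
      #(free (meet p.1 p.2)) ∈ range (r + 1) := by
    intro p hp
    simp only [mem_filter, mem_product, mem_Word] at hp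
    rw [mem_range, Nat.lt_succ_iff, free_meet, ← hp.1.1]
    exact card_le_card inter_subset_left
  rw [sum_congr rfl hterm, ← sum_filter, ← sum_fiberwise_of_maps_to hmaps]
  refine sum_congr rfl fun i _ => ?_
  rw [filter_filter, ← sum_const]
  exact sum_congr rfl fun p hp => by rw [(mem_filter.1 hp).2.2]

end Subcube

open Subcube

lemma cast_choose_mul_choose_mul_choose {n r i : ℕ} (hi : i ≤ r) (h : 2 * r ≤ n) :
    (n.choose i * ((n - i).choose (r - i) * (n - r).choose (r - i)) : ℝ)
      = n.factorial / (i.factorial * (r - i).factorial ^ 2 * (n - 2 * r + i).factorial) := by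
  have e1 : n - i - (r - i) = n - r := by omega
  have e2 : n - r - (r - i) = n - 2 * r + i := by omega
  rw [Nat.cast_choose ℝ (by omega : i ≤ n), Nat.cast_choose ℝ (by omega : r - i ≤ n - i),
    Nat.cast_choose ℝ (by omega : r - i ≤ n - r), e1, e2]
  field_simp

open Nat in
/-- Thanatipanonda's formula for the variance of the number of
`r`-dimensional subcubes contained in a uniformly random subset of `{0,1}^n`. -/
theorem variance_Xr (n r : ℕ) (h : 2 * r ≤ n) :
    Ex n (fun S => ((Xr n r S : ℝ) - Ex n (fun S' => (Xr n r S' : ℝ))) ^ 2)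
      = ∑ i ∈ Finset.range (r + 1),
          (n ! : ℝ) * 2 ^ (n - i)
            / ((i ! : ℝ) * ((r - i)! : ℝ) ^ 2 * ((n - 2 * r + i)! : ℝ) * 2 ^ (2 ^ (r + 1)))
            * (2 ^ (2 ^ i) - 1) := by
  have hsize : ∀ p ∈ Word n r ×ˢ Word n r,
      (2 ^ #(cube p.1 ∩ cube p.2) - 1 : ℝ) / 2 ^ (#(cube p.1) + #(cube p.2))
        = (2 ^ #(cube p.1 ∩ cube p.2) - 1) / 2 ^ 2 ^ (r + 1) := by
    intro p hp
    rw [mem_product, mem_Word, mem_Word] at hp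
    rw [card_cube, card_cube, hp.1, hp.2, pow_succ, mul_two]
  simp only [Xr]
  rw [Ex_variance_card_filter_subset, sum_congr rfl hsize,
    sum_pairs_card_inter_cube (fun k => (2 ^ k - 1 : ℝ) / 2 ^ 2 ^ (r + 1)) (by simp)]
  refine sum_congr rfl fun i hi => ?_
  have hir : i ≤ r := Nat.lt_succ_iff.1 (mem_range.1 hi)
  rw [card_pairs_with_meet_card_free_eq hir, nsmul_eq_mul]
  push_cast
  rw [cast_choose_mul_choose_mul_choose hir h]
  ring
end

section
/- For a uniformly random subset S of {0,1}^n, the variance of the number X_{n,r} of r-dimensional subcubes contained in S satisfies Var(X_{n,r}) ≥ c · n^{2r} · 2^n for some constant c > 0 depending only on r, for all sufficiently large n. -/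
/-!
Write `X = ∑_w 1[C_w ⊆ S]`. Its variance is the sum over pairs `(w, w')` of the covariances of
the indicators, and for fixed sets `A, B` the covariance of `1[A ⊆ S]` and `1[B ⊆ S]` is
`(2^|A ∩ B| - 1) / 2^(|A| + |B|) ≥ |A ∩ B| / 2^(|A| + |B|)`. Subcubes have `2^r` points and
every point lies in `C(n, r)` of them, so double counting gives
`∑_{w,w'} |C_w ∩ C_w'| = 2^n C(n, r)^2`, whence `Var X ≥ 2^n C(n, r)^2 / 2^(2^(r+1))`;
finally `n^r ≤ 2^r r! C(n, r)` once `2r ≤ n`.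
-/

open Finset

open scoped Nat BigOperators

section Variance

variable {Ω ι : Type*} [Fintype Ω]

noncomputable def uniformVar (g : Ω → ℝ) : ℝ := 𝔼 ω, (g ω - 𝔼 ω', g ω') ^ 2

noncomputable def uniformCov (f g : Ω → ℝ) : ℝ :=
  𝔼 ω, f ω * g ω - (𝔼 ω, f ω) * 𝔼 ω, g ω

variable [Nonempty Ω]

lemma uniformVar_eq (g : Ω → ℝ) : uniformVar g = 𝔼 ω, g ω ^ 2 - (𝔼 ω, g ω) ^ 2 := by
  simp_rw [uniformVar, sub_sq, expect_add_distrib, expect_sub_distrib]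
  rw [← expect_mul, ← mul_expect, Fintype.expect_const]
  ring

lemma uniformVar_sum (s : Finset ι) (f : ι → Ω → ℝ) :
    uniformVar (fun ω => ∑ i ∈ s, f i ω)
      = ∑ i ∈ s, ∑ j ∈ s, uniformCov (f i) (f j) := by
  simp_rw [uniformVar_eq, uniformCov, sq, sum_mul_sum, expect_sum_comm, sum_mul_sum,
    ← sum_sub_distrib]

end Variance

section RandomSubset

variable {α ι : Type*} [DecidableEq α]

lemma ite_subset_mul_ite_subset (A B S : Finset α) :
    (if A ⊆ S then 1 else 0 : ℝ) * (if B ⊆ S then 1 else 0)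
      = if A ∪ B ⊆ S then 1 else 0 := by
  by_cases hA : A ⊆ S <;> by_cases hB : B ⊆ S <;> simp [hA, hB, union_subset_iff]

variable [Fintype α]

lemma card_filter_superset (A : Finset α) :
    #{S : Finset α | A ⊆ S} = 2 ^ (Fintype.card α - #A) := by
  rw [← card_univ, ← card_Icc_finset (subset_univ A)]
  congr 1
  ext S
  simp [subset_univ]

lemma expect_ite_subset (A : Finset α) :
    𝔼 S : Finset α, (if A ⊆ S then 1 else 0 : ℝ) = (2 ^ #A)⁻¹ := by
  rw [Fintype.expect_eq_sum_div_card, sum_boole, card_filter_superset, Fintype.card_finset]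
  push_cast
  rw [pow_sub₀ _ two_ne_zero (card_le_univ A)]
  field_simp

lemma uniformCov_ite_subset (A B : Finset α) :
    uniformCov (fun S => if A ⊆ S then 1 else 0) (fun S => if B ⊆ S then 1 else 0)
      = (2 ^ #(A ∩ B) - 1) / 2 ^ (#A + #B) := by
  simp_rw [uniformCov, ite_subset_mul_ite_subset, expect_ite_subset, ← mul_inv, ← pow_add,
    ← card_union_add_card_inter A B, pow_add]
  field_simp

lemma card_inter_div_le_uniformCov_ite_subset (A B : Finset α) :
    (#(A ∩ B) : ℝ) / 2 ^ (#A + #B)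
      ≤ uniformCov (fun S => if A ⊆ S then 1 else 0) (fun S => if B ⊆ S then 1 else 0) := by
  rw [uniformCov_ite_subset]
  gcongr
  rw [le_sub_iff_add_le]
  exact_mod_cast Nat.lt_two_pow_self

lemma sum_sum_card_inter (s : Finset ι) (C : ι → Finset α) :
    ∑ i ∈ s, ∑ j ∈ s, #(C i ∩ C j) = ∑ x, #{i ∈ s | x ∈ C i} ^ 2 := by
  have hinter : ∀ i j, #(C i ∩ C j)
      = ∑ x, (if x ∈ C i then 1 else 0) * (if x ∈ C j then 1 else 0) := fun i j => by
    simp_rw [ite_zero_mul_ite_zero, mul_one, sum_boole]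
    congr 1
    ext x
    simp
  simp_rw [hinter, card_filter, sq, sum_mul_sum]
  exact (sum_congr rfl fun i _ => sum_comm).trans sum_comm

lemma sum_sum_card_inter_div_le_uniformVar (s : Finset ι) (C : ι → Finset α) :
    ∑ i ∈ s, ∑ j ∈ s, (#(C i ∩ C j) : ℝ) / 2 ^ (#(C i) + #(C j))
      ≤ uniformVar fun S : Finset α => (#{i ∈ s | C i ⊆ S} : ℝ) := by
  simp_rw [card_filter, Nat.cast_sum, Nat.cast_ite, Nat.cast_one, Nat.cast_zero,
    uniformVar_sum]
  exact sum_le_sum fun i _ => sum_le_sum fun j _ =>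
    card_inter_div_le_uniformCov_ite_subset (C i) (C j)

lemma card_mul_sq_div_le_uniformVar_of_regular {s : Finset ι} {C : ι → Finset α} {m d : ℕ}
    (hcard : ∀ i ∈ s, #(C i) = m) (hdeg : ∀ x, #{i ∈ s | x ∈ C i} = d) :
    (Fintype.card α * d ^ 2 : ℝ) / 2 ^ (2 * m)
      ≤ uniformVar fun S : Finset α => (#{i ∈ s | C i ⊆ S} : ℝ) := by
  have hpairs : ∑ i ∈ s, ∑ j ∈ s, #(C i ∩ C j) = Fintype.card α * d ^ 2 := by
    simp [sum_sum_card_inter, hdeg]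
  refine le_trans (le_of_eq ?_) (sum_sum_card_inter_div_le_uniformVar s C)
  rw [← Nat.cast_pow, ← Nat.cast_mul, ← hpairs, Nat.cast_sum, sum_div]
  refine sum_congr rfl fun i hi => ?_
  rw [Nat.cast_sum, sum_div]
  refine sum_congr rfl fun j hj => ?_
  rw [hcard i hi, hcard j hj, two_mul]

end RandomSubset

lemma cube_eq_piFinset {n : ℕ} (w : Fin n → Option Bool) :
    cube w = Fintype.piFinset fun i => (w i).elim univ fun b => {b} := by
  ext x
  simp only [cube, mem_filter, mem_univ, true_and, Fintype.mem_piFinset]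
  refine forall_congr' fun i => ?_
  cases w i <;> simp

lemma card_cube {n r : ℕ} {w : Fin n → Option Bool} (hw : w ∈ Word n r) :
    #(cube w) = 2 ^ r := by
  have hfree : ∀ i, #((w i).elim univ fun b => {b}) = if w i = none then 2 else 1 := fun i => by
    cases w i <;> simp
  simp only [Word, mem_filter, mem_univ, true_and] at hw
  rw [cube_eq_piFinset, Fintype.card_piFinset]
  simp_rw [hfree]
  rw [prod_ite, prod_const, prod_const_one, mul_one, hw]

lemma card_filter_mem_cube {n : ℕ} (r : ℕ) (x : Fin n → Bool) :
    #{w ∈ Word n r | x ∈ cube w} = n.choose r := by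
  have hsets : n.choose r = #(powersetCard r (univ : Finset (Fin n))) := by simp
  rw [hsets]
  refine card_nbij' (fun w => ({i | w i = none} : Finset (Fin n)))
    (fun K i => if i ∈ K then none else some (x i)) ?_ ?_ ?_ ?_
  · intro w hw
    simp_all [Word]
  · intro K hK
    simp only [mem_coe, mem_powersetCard_univ] at hK
    have hfree : ({i | (if i ∈ K then none else some (x i)) = none} : Finset (Fin n)) = K := by
      ext i; by_cases hi : i ∈ K <;> simp [hi]
    simp only [coe_filter, Set.mem_ofPred_eq, Word, cube, mem_filter, mem_univ, true_and, hfree, hK]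
    intro i b hb
    by_cases hi : i ∈ K <;> simp_all
  · intro w hw
    simp only [coe_filter, Set.mem_ofPred_eq, Word, cube, mem_filter, mem_univ, true_and] at hw
    funext i
    cases hwi : w i with
    | none => simp [hwi]
    | some b => simp [hwi, hw.2 i b hwi]
  · intro K _
    ext i; by_cases hi : i ∈ K <;> simp [hi]

lemma pow_le_two_pow_mul_factorial_mul_choose {n r : ℕ} (h : 2 * r ≤ n + 2) :
    n ^ r ≤ 2 ^ r * r ! * n.choose r := by
  calc n ^ r ≤ (2 * (n + 1 - r)) ^ r := Nat.pow_le_pow_left (by omega) r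
    _ ≤ 2 ^ r * n.descFactorial r := by
      rw [mul_pow]; exact Nat.mul_le_mul_left _ (Nat.pow_sub_le_descFactorial n r)
    _ = 2 ^ r * r ! * n.choose r := by rw [Nat.descFactorial_eq_factorial_mul_choose, mul_assoc]

lemma Ex_eq_expect (n : ℕ) (f : Finset (Fin n → Bool) → ℝ) : Ex n f = 𝔼 S, f S := by
  rw [Ex, Fintype.expect_eq_sum_div_card]

lemma Ex_sub_Ex_sq_eq_uniformVar (n : ℕ) (f : Finset (Fin n → Bool) → ℝ) :
    Ex n (fun S => (f S - Ex n f) ^ 2) = uniformVar f := by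
  simp only [Ex_eq_expect, uniformVar]

/-- For each fixed `r`, the variance of `X_{n,r}` is at least `c · n^(2r) · 2^n`
for some constant `c > 0` (depending only on `r`) and all sufficiently large `n`. -/
theorem variance_lower_bound (r : ℕ) :
    ∃ c : ℝ, 0 < c ∧ ∃ N : ℕ, ∀ n ≥ N,
      Ex n (fun S => ((Xr n r S : ℝ) - Ex n (fun S' => (Xr n r S' : ℝ))) ^ 2)
        ≥ c * (n : ℝ) ^ (2 * r) * 2 ^ n := by
  refine ⟨((2 ^ r * r ! : ℝ) ^ 2 * 2 ^ (2 * 2 ^ r))⁻¹, by positivity, 2 * r,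
    fun n hn => ?_⟩
  have hvar := card_mul_sq_div_le_uniformVar_of_regular (s := Word n r) (C := cube)
    (fun _ hw => card_cube hw) (card_filter_mem_cube r)
  have hchoose : (n : ℝ) ^ r ≤ 2 ^ r * r ! * n.choose r := by
    exact_mod_cast pow_le_two_pow_mul_factorial_mul_choose (by omega)
  rw [Ex_sub_Ex_sq_eq_uniformVar, ge_iff_le]
  refine le_trans ?_ hvar
  calc ((2 ^ r * r ! : ℝ) ^ 2 * 2 ^ (2 * 2 ^ r))⁻¹ * (n : ℝ) ^ (2 * r) * 2 ^ n
      ≤ ((2 ^ r * r ! : ℝ) ^ 2 * 2 ^ (2 * 2 ^ r))⁻¹ * (2 ^ r * r ! * n.choose r) ^ 2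
          * 2 ^ n := by
        rw [pow_mul' (n : ℝ)]; gcongr
    _ = 2 ^ n * n.choose r ^ 2 / 2 ^ (2 * 2 ^ r) := by field_simp
    _ = _ := by simp
end
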